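/- Let N \ge 2 and \nu \ge 1 be integers, let s_\nu = (4/(N(2+\nu)))^{1/(\nu+4)} be the Silverman bandwidth and \hat{s}_\nu = s_\nu / \sqrt{s_\nu^2 + (N-1)/N}. Let \eta^{d,1},...,\eta^{d,N} be vectors in R^\nu with empirical mean zero and empirical covariance [c'] = (1/(N-1)) \sum_{j=1}^N \eta^{d,j}(\eta^{d,j})^T equal to I_\nu, and let p_H be the modified Gaussian kernel-density estimate built from these data with parameters s_\nu, \hat{s}_\nu. Then \int_{R^\nu} \eta \eta^T p_H(\eta) d\eta = I_\nu. -/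

import Mathlib

/-! The kernel `(2π ŝ²)^(-ν/2) exp (-‖m - η‖² / (2ŝ²))` is the product of the one-dimensional
Gaussian densities with means `m i` and variance `ŝ²`, so by Fubini its second moments
`m k * m l + ŝ² δₖₗ` reduce to the mean and variance of `gaussianReal`. Averaging
over the shrunk centres `m = (ŝ/s) η^{d,j}` and using the empirical covariance gives
`((ŝ/s)² (N-1)/N + ŝ²) I`, and `ŝ` is chosen exactly so that this coefficient is `1`. -/

open MeasureTheory Real Finset Matrix
open scoped NNReal

namespace ProbabilityTheory

section Real

variable {m : ℝ} {v : ℝ≥0}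

lemma integrable_pow_gaussianReal (n : ℕ) : Integrable (fun x ↦ x ^ n) (gaussianReal m v) := by
  have h := (memLp_id_gaussianReal (μ := m) (v := v) n).integrable_norm_pow'
  refine (integrable_norm_iff (by fun_prop)).mp ?_
  simpa [norm_pow] using h

lemma integral_sq_gaussianReal : ∫ x, x ^ 2 ∂gaussianReal m v = m ^ 2 + v := by
  have h := variance_eq_sub (memLp_id_gaussianReal' (μ := m) (v := v) 2 (by simp))
  rw [variance_id_gaussianReal] at h
  simp only [Pi.pow_apply, id, integral_id_gaussianReal] at h
  linarith

lemma integrable_gaussianPDFReal_mul_pow (hv : v ≠ 0) (n : ℕ) :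
    Integrable (fun x ↦ gaussianPDFReal m v x * x ^ n) := by
  have h := integrable_pow_gaussianReal (m := m) (v := v) n
  rw [gaussianReal_of_var_ne_zero _ hv, integrable_withDensity_iff_integrable_smul'
    (measurable_gaussianPDF _ _) (.of_forall fun _ ↦ gaussianPDF_lt_top)] at h
  simpa only [toReal_gaussianPDF, smul_eq_mul] using h

end Real

variable {ι : Type*} [Fintype ι] {v : ℝ≥0}

lemma integral_prod_gaussianPDFReal_mul_pow (m : ι → ℝ) (hv : v ≠ 0) (n : ι → ℕ) :
    ∫ x : ι → ℝ, ∏ i, gaussianPDFReal (m i) v (x i) * x i ^ n i =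
      ∏ i, ∫ t, t ^ n i ∂gaussianReal (m i) v := by
  rw [integral_fintype_prod_volume_eq_prod (fun i t ↦ gaussianPDFReal (m i) v t * t ^ n i)]
  simp only [integral_gaussianReal_eq_integral_smul hv, smul_eq_mul]

lemma integrable_prod_gaussianPDFReal_mul_pow (m : ι → ℝ) (hv : v ≠ 0) (n : ι → ℕ) :
    Integrable (fun x : ι → ℝ ↦ ∏ i, gaussianPDFReal (m i) v (x i) * x i ^ n i) :=
  Integrable.fintype_prod (f := fun i t ↦ gaussianPDFReal (m i) v t * t ^ n i)
    fun _ ↦ integrable_gaussianPDFReal_mul_pow hv _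

noncomputable def isotropicGaussianPDF (m : EuclideanSpace ℝ ι) (v : ℝ≥0)
    (η : EuclideanSpace ℝ ι) : ℝ :=
  ∏ i, gaussianPDFReal (m i) v (η i)

lemma isotropicGaussianPDF_eq (m η : EuclideanSpace ℝ ι) :
    isotropicGaussianPDF m v η =
      (2 * π * v) ^ (-(Fintype.card ι : ℝ) / 2) * exp (-‖m - η‖ ^ 2 / (2 * v)) := by
  have hpos : (0 : ℝ) ≤ 2 * π * v := by positivity
  simp only [isotropicGaussianPDF, gaussianPDFReal, prod_mul_distrib, prod_const, ← exp_sum,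
    card_univ, EuclideanSpace.real_norm_sq_eq, ← sum_div, ← sum_neg_distrib]
  have hconst : (√(2 * π * v))⁻¹ ^ Fintype.card ι = (2 * π * v) ^ (-(Fintype.card ι : ℝ) / 2) := by
    rw [sqrt_eq_rpow, ← rpow_neg hpos, ← rpow_natCast, ← rpow_mul hpos]
    ring_nf
  rw [hconst]
  congr 3
  exact Fintype.sum_congr _ _ fun i ↦ by simp [sub_sq_comm]

variable [DecidableEq ι]

lemma isotropicGaussianPDF_mul_coord_mul_coord (m η : EuclideanSpace ℝ ι) (k l : ι) :
    isotropicGaussianPDF m v η * (η k * η l) =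
      ∏ i, gaussianPDFReal (m i) v (η i) * η i ^ (Pi.single k 1 + Pi.single l 1 : ι → ℕ) i := by
  have hcoord (j : ι) : ∏ i, η i ^ (Pi.single j 1 : ι → ℕ) i = η j := by
    simp [Pi.single_apply]
  simp only [isotropicGaussianPDF, Pi.add_apply, pow_add, prod_mul_distrib, hcoord]

lemma integrable_isotropicGaussianPDF_mul_coord_mul_coord (m : EuclideanSpace ℝ ι) (hv : v ≠ 0)
    (k l : ι) : Integrable (fun η ↦ isotropicGaussianPDF m v η * (η k * η l)) := by
  simp_rw [isotropicGaussianPDF_mul_coord_mul_coord]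
  rw [← (PiLp.volume_preserving_toLp ι).integrable_comp_emb
    (MeasurableEquiv.toLp 2 _).measurableEmbedding]
  exact integrable_prod_gaussianPDFReal_mul_pow (fun i ↦ m i) hv _

lemma integral_isotropicGaussianPDF_mul_coord_mul_coord (m : EuclideanSpace ℝ ι) (hv : v ≠ 0)
    (k l : ι) :
    ∫ η, isotropicGaussianPDF m v η * (η k * η l) = m k * m l + if k = l then (v : ℝ) else 0 := by
  simp_rw [isotropicGaussianPDF_mul_coord_mul_coord]
  rw [← (PiLp.volume_preserving_toLp ι).integral_comp
    (MeasurableEquiv.toLp 2 _).measurableEmbedding]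
  rw [integral_prod_gaussianPDFReal_mul_pow (fun i ↦ m i) hv]
  rcases eq_or_ne k l with rfl | hkl
  · rw [Fintype.prod_eq_single k fun i hi ↦ by simp [hi]]
    simp [← two_mul, integral_sq_gaussianReal, ← sq]
  · rw [prod_eq_mul k l hkl (fun i _ hi ↦ by simp [hi.1, hi.2]) (by simp) (by simp)]
    simp [hkl, hkl.symm, integral_id_gaussianReal]

lemma integral_const_mul_sum_isotropicGaussianPDF_mul_coord_mul_coord {J : Type*} (t : Finset J)
    (c : ℝ) (m : J → EuclideanSpace ℝ ι) (hv : v ≠ 0) (k l : ι) :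
    ∫ η, (c * ∑ j ∈ t, isotropicGaussianPDF (m j) v η) * (η k * η l) =
      c * ∑ j ∈ t, (m j k * m j l + if k = l then (v : ℝ) else 0) := by
  simp_rw [mul_assoc, sum_mul]
  rw [integral_const_mul, integral_finsetSum _
    fun j _ ↦ integrable_isotropicGaussianPDF_mul_coord_mul_coord _ hv k l]
  simp_rw [integral_isotropicGaussianPDF_mul_coord_mul_coord _ hv]

end ProbabilityTheory

open ProbabilityTheory

theorem modified_gaussian_kde_unit_second_moment_general
    (ν N : ℕ) (hN : 2 ≤ N)
    (s shat : ℝ)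
    (hsdef : s = (4 / ((N : ℝ) * (2 + (ν : ℝ)))) ^ ((1 : ℝ) / ((ν : ℝ) + 4)))
    (hshatdef : shat = s / Real.sqrt (s ^ 2 + ((N : ℝ) - 1) / N))
    (ηd : Fin N → EuclideanSpace ℝ (Fin ν))
    (hcov : (1 / ((N : ℝ) - 1)) •
      ∑ j, vecMulVec (fun k => ηd j k) (fun k => ηd j k) =
        (1 : Matrix (Fin ν) (Fin ν) ℝ))
    (p : EuclideanSpace ℝ (Fin ν) → ℝ)
    (hp : ∀ η, p η = (1 / (N : ℝ)) * ∑ j,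
      (2 * π * shat ^ 2) ^ (-(ν : ℝ) / 2) *
        Real.exp (-‖(shat / s) • ηd j - η‖ ^ 2 / (2 * shat ^ 2))) :
    ∀ k l, (∫ η, p η * (η k * η l)) = (1 : Matrix (Fin ν) (Fin ν) ℝ) k l := by
  intro k l
  have hN1 : (0 : ℝ) < N - 1 := by
    have : (2 : ℝ) ≤ N := by exact_mod_cast hN
    linarith
  have hs : 0 < s := hsdef ▸ rpow_pos_of_pos (by positivity) _
  have hshat : 0 < shat := hshatdef ▸ div_pos hs (sqrt_pos.mpr (by positivity))
  set v : ℝ≥0 := ⟨shat ^ 2, sq_nonneg _⟩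
  have hv_coe : (v : ℝ) = shat ^ 2 := rfl
  have hv : v ≠ 0 := fun h ↦ by simp [← NNReal.coe_eq_zero, hv_coe, hshat.ne'] at h
  have hmixture (η : EuclideanSpace ℝ (Fin ν)) :
      p η = 1 / N * ∑ j, isotropicGaussianPDF ((shat / s) • ηd j) v η := by
    simp [hp, isotropicGaussianPDF_eq, hv_coe]
  have hcov_kl : ∑ j, ηd j k * ηd j l = (N - 1) * (1 : Matrix (Fin ν) (Fin ν) ℝ) k l := by
    rw [← hcov]
    simp [Matrix.sum_apply, vecMulVec_apply, hN1.ne']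
  have hbandwidth : (shat / s) ^ 2 * (N - 1) + N * shat ^ 2 = N := by
    have hshat_sq : shat ^ 2 = s ^ 2 / (s ^ 2 + (N - 1) / N) := by
      rw [hshatdef, div_pow, sq_sqrt (by positivity)]
    rw [div_pow, hshat_sq]
    field_simp
    ring
  calc ∫ η, p η * (η k * η l)
      = 1 / N * ∑ j, ((shat / s) ^ 2 * (ηd j k * ηd j l) + if k = l then shat ^ 2 else 0) := by
        simp_rw [hmixture, integral_const_mul_sum_isotropicGaussianPDF_mul_coord_mul_coord _ _ _ hv,
          PiLp.smul_apply, smul_eq_mul, hv_coe]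
        ring_nf
    _ = (1 : Matrix (Fin ν) (Fin ν) ℝ) k l := by
        rw [sum_add_distrib, ← mul_sum, hcov_kl]
        rcases eq_or_ne k l with rfl | hkl
        · simp only [one_apply_eq, mul_one, if_true, sum_const, card_univ, Fintype.card_fin,
            nsmul_eq_mul, hbandwidth]
          field_simp
        · simp [hkl]

/-- with the Silverman bandwidth s_ν and the modified bandwidth
ŝ_ν, if the data are centered with unit empirical covariance, then the
second-moment matrix of the modified Gaussian kernel density estimate is the
identity (stated entrywise). -/
theorem modified_gaussian_kde_unit_second_moment
    (ν N : ℕ) (hN : 2 ≤ N) (hν : 1 ≤ ν)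
    (s shat : ℝ)
    (hsdef : s = (4 / ((N : ℝ) * (2 + (ν : ℝ)))) ^ ((1 : ℝ) / ((ν : ℝ) + 4)))
    (hshatdef : shat = s / Real.sqrt (s ^ 2 + ((N : ℝ) - 1) / N))
    (ηd : Fin N → EuclideanSpace ℝ (Fin ν))
    (hmean : (1 / (N : ℝ)) • ∑ j, ηd j = 0)
    (hcov : (1 / ((N : ℝ) - 1)) •
      ∑ j, vecMulVec (fun k => ηd j k) (fun k => ηd j k) =
        (1 : Matrix (Fin ν) (Fin ν) ℝ))
    (p : EuclideanSpace ℝ (Fin ν) → ℝ)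
    (hp : ∀ η, p η = (1 / (N : ℝ)) * ∑ j,
      (2 * π * shat ^ 2) ^ (-(ν : ℝ) / 2) *
        Real.exp (-‖(shat / s) • ηd j - η‖ ^ 2 / (2 * shat ^ 2))) :
    ∀ k l, (∫ η, p η * (η k * η l)) = (1 : Matrix (Fin ν) (Fin ν) ℝ) k l :=
  modified_gaussian_kde_unit_second_moment_general ν N hN s shat hsdef hshatdef ηd hcov p hp
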